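/- Let $G(r,t) = (4\pi t)^{-3/2} e^{-t} \frac{r}{\sinh r} e^{-r^2/(4t)}$ and $E_1(s,t) = (4\pi t)^{-1/2} e^{-s^2/(4t)}$. Then for every $L > 0$: $\frac{4\pi (\sinh r)^2\, G(r,t)}{E_1(r - 2t,\, t)} \to 1$ as $t \to \infty$, uniformly on the set $\{r > 0 : |r - 2t| \le L\sqrt{t}\}$. -/

import Mathlib

open Real Filter

/-- The fundamental solution of the heat equation on `ℍ³` in geodesic polar
coordinates: `G(r,t) = (4πt)^(-3/2) e^{-t} (r / sinh r) e^{-r²/(4t)}`. -/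
noncomputable def hypHeatKernel (r t : ℝ) : ℝ :=
  (4 * π * t) ^ (-(3 : ℝ) / 2) * Real.exp (-t) * (r / Real.sinh r) *
    Real.exp (-r ^ 2 / (4 * t))

/-- The one-dimensional Gaussian heat kernel `E₁(s,t) = (4πt)^(-1/2) e^{-s²/(4t)}`. -/
noncomputable def gaussKernel1D (s t : ℝ) : ℝ :=
  (4 * π * t) ^ (-(1 : ℝ) / 2) * Real.exp (-s ^ 2 / (4 * t))

/-! Writing `sinh r = eʳ (1 - e^{-2r}) / 2` and completing the square
`t + r² / (4t) = (r - 2t)² / (4t) + r`, the ratio of the radial density to `E₁(r - 2t, t)` is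
exactly `r (1 - e^{-2r}) / (2t)`. Its distance to `1` is `|(r - 2t) - r e^{-2r}| / (2t)`; since
`0 ≤ r e^{-2r} ≤ 1`, this is at most `(L √t + 1) / (2t) → 0` on the window `|r - 2t| ≤ L √t`. -/

open Topology

lemma Real.sinh_mul_exp_neg (r : ℝ) : sinh r * exp (-r) = (1 - exp (-(2 * r))) / 2 := by
  rw [sinh_eq, show -(2 * r) = -r + -r by ring, exp_add, exp_neg]
  field_simp

lemma hypHeatKernel_eq_gaussKernel1D_mul (r : ℝ) {t : ℝ} (ht : 0 < t) :
    hypHeatKernel r t = gaussKernel1D (r - 2 * t) t * (r / sinh r) * exp (-r) / (4 * π * t) := by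
  have hA : 0 < 4 * π * t := by positivity
  have hpow : (4 * π * t) ^ (-(3 : ℝ) / 2) = (4 * π * t) ^ (-(1 : ℝ) / 2) * (4 * π * t)⁻¹ := by
    rw [← rpow_neg_one, ← rpow_add hA]
    norm_num
  have hsquare :
      exp (-t) * exp (-r ^ 2 / (4 * t)) = exp (-(r - 2 * t) ^ 2 / (4 * t)) * exp (-r) := by
    rw [← exp_add, ← exp_add]
    congr 1
    field_simp
    ring
  unfold hypHeatKernel gaussKernel1D
  rw [hpow, div_eq_mul_inv _ (4 * π * t)]
  linear_combination ((4 * π * t) ^ (-(1 : ℝ) / 2) * (4 * π * t)⁻¹ * (r / sinh r)) * hsquare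

lemma hypHeatKernel_density_div_gaussKernel1D (r : ℝ) {t : ℝ} (ht : 0 < t) :
    4 * π * sinh r ^ 2 * hypHeatKernel r t / gaussKernel1D (r - 2 * t) t
      = r * (1 - exp (-(2 * r))) / (2 * t) := by
  rcases eq_or_ne r 0 with rfl | hr
  · simp
  have hsinh : sinh r ≠ 0 := sinh_ne_zero.2 hr
  have hE : gaussKernel1D (r - 2 * t) t ≠ 0 := by unfold gaussKernel1D; positivity
  rw [hypHeatKernel_eq_gaussKernel1D_mul r ht]
  field_simp
  linear_combination (norm := ring_nf) 2 * sinh_mul_exp_neg r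

lemma abs_hypHeatKernel_density_div_sub_one_le {r t : ℝ} (hr : 0 ≤ r) (ht : 0 < t) :
    |4 * π * sinh r ^ 2 * hypHeatKernel r t / gaussKernel1D (r - 2 * t) t - 1|
      ≤ (|r - 2 * t| + 1) / (2 * t) := by
  have hdecay : |r * exp (-(2 * r))| ≤ 1 := by
    rw [abs_of_nonneg (by positivity)]
    nlinarith [mul_exp_neg_le_exp_neg_one (2 * r), exp_neg_one_lt_half, exp_pos (-(2 * r))]
  rw [hypHeatKernel_density_div_gaussKernel1D r ht,
    show r * (1 - exp (-(2 * r))) / (2 * t) - 1 = (r - 2 * t - r * exp (-(2 * r))) / (2 * t) by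
      field_simp; ring,
    abs_div, abs_of_pos (by positivity : 0 < 2 * t)]
  gcongr
  exact (abs_sub _ _).trans (by gcongr)

lemma tendsto_mul_sqrt_add_one_div_atTop (L : ℝ) :
    Tendsto (fun t ↦ (L * √t + 1) / (2 * t)) atTop (𝓝 0) := by
  have hlim : Tendsto (fun t ↦ L / 2 * (√t)⁻¹ + 2⁻¹ * t⁻¹) atTop (𝓝 (L / 2 * 0 + 2⁻¹ * 0)) :=
    ((tendsto_inv_atTop_zero.comp tendsto_sqrt_atTop).const_mul _).add
      (tendsto_inv_atTop_zero.const_mul _)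
  rw [mul_zero, mul_zero, add_zero] at hlim
  refine hlim.congr' ?_
  filter_upwards [eventually_gt_atTop 0] with t ht
  have hsqrt : √t ≠ 0 := (sqrt_pos.2 ht).ne'
  field_simp
  linear_combination -L * mul_self_sqrt ht.le

/-- The radial mass density of the hyperbolic heat kernel converges to the drifted 1D
Gaussian: `4π (sinh r)² G(r,t) / E₁(r - 2t, t) → 1` as `t → ∞`, uniformly on
`{r > 0 : |r - 2t| ≤ L√t}`. -/
theorem hypHeatKernel_density_ratio_to_one :
    ∀ L > (0 : ℝ), ∀ ε > (0 : ℝ), ∃ T : ℝ, ∀ t ≥ T, ∀ r > (0 : ℝ),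
      |r - 2 * t| ≤ L * Real.sqrt t →
      |4 * π * (Real.sinh r) ^ 2 * hypHeatKernel r t / gaussKernel1D (r - 2 * t) t - 1|
        ≤ ε := by
  intro L _ ε hε
  obtain ⟨T, hT⟩ := eventually_atTop.1 <|
    ((tendsto_mul_sqrt_add_one_div_atTop L).eventually (ge_mem_nhds hε)).and
      (eventually_gt_atTop 0)
  refine ⟨T, fun t ht r hr hwindow ↦ ?_⟩
  obtain ⟨hsmall, ht0⟩ := hT t ht
  calc _ ≤ (|r - 2 * t| + 1) / (2 * t) := abs_hypHeatKernel_density_div_sub_one_le hr.le ht0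
    _ ≤ (L * √t + 1) / (2 * t) := by gcongr
    _ ≤ ε := hsmall
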